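/- arXiv:math/0602117 — 2 statements merged into one kernel-verified Lean document; each statement's English description precedes it below -/
import Mathlib

section
/- In the category O_d of oriented Kauffman diagrams with loop parameter d, the endomorphism space End(X^w) of the object associated to a word w in {X, X*} is one-dimensional if and only if w = X^n or w = (X*)^n for some n ≥ 0 (i.e., w uses only one of the two letters). -/
/-!
Words in the letters `{X, X*}` (elements of the free product monoid `ℕ * ℕ`) are
modeled as `List Bool`, with `true` standing for the letter `X` and `false` for `X*`.
An oriented Kauffman diagram of type `(w, w')` is a Kauffman diagram with
`w.length` top endpoints and `w'.length` bottom endpoints, each string oriented,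
such that the top endpoints are labeled (outgoing = `X`, incoming = `X*`) spelling
`w`, and the bottom endpoints are labeled (incoming = `X`, outgoing = `X*`)
spelling `w'`.
-/

/-- Position of the `i`-th boundary point in the cyclic order around the boundary of
the rectangle (top points left to right, then bottom points right to left). -/
def boundaryPos (m n : ℕ) (i : Fin (m + n)) : ℕ :=
  if (i : ℕ) < m then (i : ℕ) else m + n - 1 - ((i : ℕ) - m)

/-- A Kauffman diagram of type `(m, n)`: a planar (non-crossing) pairing of the
`m` top points and `n` bottom points by disjoint strings, each boundary point lying
on exactly one string. -/
structure KauffmanDiagram (m n : ℕ) where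
  /-- the matching: `match' i` is the other endpoint of the string through `i` -/
  match' : Fin (m + n) → Fin (m + n)
  invol : ∀ i, match' (match' i) = i
  noFix : ∀ i, match' i ≠ i
  noncross : ∀ a b : Fin (m + n),
    ¬ (boundaryPos m n a < boundaryPos m n b ∧
       boundaryPos m n b < boundaryPos m n (match' a) ∧
       boundaryPos m n (match' a) < boundaryPos m n (match' b))

/-- The set of strings of a Kauffman diagram, each string recorded as the (unordered)
pair of its two endpoints. -/
def KauffmanDiagram.strings {m n : ℕ} (D : KauffmanDiagram m n) :
    Finset (Finset (Fin (m + n))) :=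
  Finset.univ.image fun i => ({i, D.match' i} : Finset (Fin (m + n)))

/-- An orientation of a Kauffman diagram: an independent choice of direction for each
string, recorded by marking exactly one endpoint of each string as its source
(`o i = true` iff the string starts at `i`). -/
def KauffmanDiagram.Orientation {m n : ℕ} (D : KauffmanDiagram m n) : Type :=
  { o : Fin (m + n) → Bool // ∀ i, o (D.match' i) = !(o i) }

/-- An oriented Kauffman diagram of type `(w, w')` for words `w, w' : List Bool`
(`true` = `X`, `false` = `X*`): the underlying diagram has `w.length` top points and
`w'.length` bottom points; `o i = true` iff the string through the boundary point `i`
starts (is outgoing) there.  A top point is labeled `X` iff it is outgoing, and a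
bottom point is labeled `X` iff it is incoming. -/
structure OrientedKauffmanDiagram (w w' : List Bool) where
  toDiagram : KauffmanDiagram w.length w'.length
  o : Fin (w.length + w'.length) → Bool
  flip : ∀ i, o (toDiagram.match' i) = !(o i)
  topLabel : ∀ i : Fin w.length, w.get i = o (Fin.castAdd w'.length i)
  botLabel : ∀ j : Fin w'.length, w'.get j = !(o (Fin.natAdd w.length j))

/-!
If both letters occur in `w`, two adjacent letters differ, and the Temperley–Lieb diagram `e_i`
capping them off on top and cupping them off at the bottom can be oriented compatibly: a second
basis diagram besides the identity. If `w` is constant, no string can join two top points (their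
orientations would agree), so every string runs from top to bottom; noncrossing makes them
monotone, hence vertical, and the orientation is forced by the labels.
-/

namespace KauffmanDiagram

variable {m n : ℕ}

@[simp]
lemma boundaryPos_castAdd (i : Fin m) : boundaryPos m n (Fin.castAdd n i) = i := by
  simp [boundaryPos]

@[simp]
lemma boundaryPos_natAdd (j : Fin n) : boundaryPos m n (Fin.natAdd m j) = m + n - 1 - j := by
  simp [boundaryPos]

lemma ext_match {D D' : KauffmanDiagram m n} (h : D.match' = D'.match') : D = D' := by
  cases D; cases D'; cases h; rfl

lemma noncross_of_mirror_or_adjacent {f : Fin (m + n) → Fin (m + n)}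
    (h : ∀ k, boundaryPos m n k + boundaryPos m n (f k) = m + n - 1 ∨
      boundaryPos m n (f k) = boundaryPos m n k + 1 ∨
      boundaryPos m n k = boundaryPos m n (f k) + 1) (a b : Fin (m + n)) :
    ¬ (boundaryPos m n a < boundaryPos m n b ∧
       boundaryPos m n b < boundaryPos m n (f a) ∧
       boundaryPos m n (f a) < boundaryPos m n (f b)) := by
  rintro ⟨hab, hbfa, hfafb⟩
  rcases h a with ha | ha | ha <;> rcases h b with hb | hb | hb <;> omega

def id (n : ℕ) : KauffmanDiagram n n where
  match' := Fin.append (Fin.natAdd n) (Fin.castAdd n)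
  invol := Fin.addCases (fun j => by simp only [Fin.append_left, Fin.append_right])
    (fun j => by simp only [Fin.append_left, Fin.append_right])
  noFix := Fin.addCases
    (fun j h => by
      simp only [Fin.append_left, Fin.ext_iff, Fin.val_castAdd, Fin.val_natAdd] at h; omega)
    (fun j h => by
      simp only [Fin.append_right, Fin.ext_iff, Fin.val_castAdd, Fin.val_natAdd] at h; omega)
  noncross := noncross_of_mirror_or_adjacent <| Fin.addCases
    (fun j => by simp only [Fin.append_left, boundaryPos_castAdd, boundaryPos_natAdd]; omega)
    (fun j => by simp only [Fin.append_right, boundaryPos_castAdd, boundaryPos_natAdd]; omega)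

@[simp]
lemma id_match_castAdd (j : Fin n) : (id n).match' (Fin.castAdd n j) = Fin.natAdd n j :=
  Fin.append_left _ _ j

@[simp]
lemma id_match_natAdd (j : Fin n) : (id n).match' (Fin.natAdd n j) = Fin.castAdd n j :=
  Fin.append_right _ _ j

lemma val_id_match (k : Fin (n + n)) :
    ((id n).match' k : ℕ) = if (k : ℕ) < n then k + n else k - n := by
  induction k using Fin.addCases with
  | left j => simp [add_comm]
  | right j => simp [-Fin.natAdd_eq_addNat]

/-- The Temperley–Lieb generator `e_i` (a cap on top points `i, i+1`, a cup on bottom points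
`i, i+1`), obtained from the identity by exchanging bottom point `i` with top point `i+1`. -/
def capCup (n i : ℕ) (hi : i + 1 < n) : KauffmanDiagram n n :=
  let π := Equiv.swap (Fin.natAdd n (⟨i, by omega⟩ : Fin n)) (Fin.castAdd n ⟨i + 1, hi⟩)
  { match' := π ∘ (id n).match' ∘ π
    invol := fun k => by simp [π, (id n).invol]
    noFix := fun k h => (id n).noFix (π k) (by simpa [π] using congrArg π h)
    noncross := noncross_of_mirror_or_adjacent <| fun k => by
      simp only [π, Function.comp_apply, Equiv.swap_apply_def]
      split_ifs <;>
        simp only [Fin.ext_iff, val_id_match, boundaryPos, Fin.val_castAdd, Fin.val_natAdd] at * <;>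
        split_ifs at * <;> omega }

lemma capCup_match' {i : ℕ} (hi : i + 1 < n) (k : Fin (n + n)) :
    let π := Equiv.swap (Fin.natAdd n (⟨i, by omega⟩ : Fin n)) (Fin.castAdd n ⟨i + 1, hi⟩)
    (capCup n i hi).match' k = π ((id n).match' (π k)) :=
  rfl

lemma capCup_ne_id {i : ℕ} (hi : i + 1 < n) : capCup n i hi ≠ id n := by
  intro h
  have := congrArg (fun D => (D.match' (Fin.castAdd n ⟨i, by omega⟩) : ℕ)) h
  simp only [capCup_match', Equiv.swap_apply_def] at this
  split_ifs at this <;>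
    simp only [Fin.ext_iff, val_id_match, Fin.val_castAdd, Fin.val_natAdd] at * <;>
    split_ifs at * <;> omega

/-- Noncrossing forces the top-to-bottom strings to be monotone, hence vertical. -/
lemma eq_id_of_forall_top_to_bottom (D : KauffmanDiagram n n)
    (h : ∀ i : Fin n, ∃ j, D.match' (Fin.castAdd n i) = Fin.natAdd n j) : D = id n := by
  choose f hf using h
  have hmono : StrictMono f := by
    intro a b hab
    refine lt_of_le_of_ne (not_lt.1 fun hba => D.noncross (Fin.castAdd n a) (Fin.castAdd n b) ?_)
      fun he => hab.ne ?_
    · simp only [hf, boundaryPos_castAdd, boundaryPos_natAdd]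
      omega
    · have := congrArg D.match' ((hf a).trans (he ▸ (hf b).symm))
      simpa only [D.invol, Fin.castAdd_inj] using this
  have hvert (i : Fin n) : D.match' (Fin.castAdd n i) = Fin.natAdd n i := by
    rw [hf, hmono.apply_eq]
  refine ext_match (funext fun k => ?_)
  induction k using Fin.addCases with
  | left i => rw [hvert, id_match_castAdd]
  | right j => rw [id_match_natAdd, ← hvert j, D.invol]

end KauffmanDiagram

namespace OrientedKauffmanDiagram

def boundaryOrientation (w w' : List Bool) : Fin (w.length + w'.length) → Bool :=
  Fin.append w.get fun j => !w'.get j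

lemma o_eq_boundaryOrientation {w w' : List Bool} (D : OrientedKauffmanDiagram w w') :
    D.o = boundaryOrientation w w' :=
  funext <| Fin.addCases (fun i => by rw [← D.topLabel, boundaryOrientation, Fin.append_left])
    (fun j => by rw [boundaryOrientation, Fin.append_right, D.botLabel, Bool.not_not])

lemma ext_toDiagram {w w' : List Bool} {D D' : OrientedKauffmanDiagram w w'}
    (h : D.toDiagram = D'.toDiagram) : D = D' := by
  have ho := (o_eq_boundaryOrientation D).trans (o_eq_boundaryOrientation D').symm
  cases D; cases D'; cases h; cases ho; rfl

lemma flip_id_match (w : List Bool) (k : Fin (w.length + w.length)) :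
    boundaryOrientation w w ((KauffmanDiagram.id w.length).match' k) =
      !boundaryOrientation w w k := by
  induction k using Fin.addCases <;> simp [boundaryOrientation, -Fin.natAdd_eq_addNat]

def id (w : List Bool) : OrientedKauffmanDiagram w w where
  toDiagram := .id w.length
  o := boundaryOrientation w w
  flip := flip_id_match w
  topLabel i := by simp [boundaryOrientation]
  botLabel j := by simp [boundaryOrientation, -Fin.natAdd_eq_addNat]

def capCup (w : List Bool) (i : ℕ) (hi : i + 1 < w.length) (hne : w[i] ≠ w[i + 1]) :
    OrientedKauffmanDiagram w w where
  toDiagram := .capCup w.length i hi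
  o := boundaryOrientation w w
  flip k := by
    -- the swap exchanges two boundary points of equal orientation, as `w[i] ≠ w[i + 1]`
    have hswap := Equiv.apply_swap_eq_self (v := boundaryOrientation w w)
      (i := Fin.natAdd _ ⟨i, by omega⟩) (j := Fin.castAdd _ ⟨i + 1, hi⟩) <| by
        rw [boundaryOrientation, Fin.append_left, Fin.append_right]
        grind
    rw [KauffmanDiagram.capCup_match', hswap, flip_id_match, hswap]
  topLabel := (id w).topLabel
  botLabel := (id w).botLabel

lemma capCup_ne_id {w : List Bool} {i : ℕ} (hi : i + 1 < w.length) (hne : w[i] ≠ w[i + 1]) :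
    capCup w i hi hne ≠ id w :=
  fun h => KauffmanDiagram.capCup_ne_id hi (congrArg toDiagram h)

lemma toDiagram_eq_id_of_replicate {n : ℕ} {c : Bool}
    (D : OrientedKauffmanDiagram (List.replicate n c) (List.replicate n c)) :
    D.toDiagram = .id _ := by
  refine D.toDiagram.eq_id_of_forall_top_to_bottom fun i => ?_
  have hflip := D.flip (Fin.castAdd _ i)
  induction h : D.toDiagram.match' (Fin.castAdd _ i) using Fin.addCases with
  | left j => simp [h, o_eq_boundaryOrientation, boundaryOrientation] at hflip
  | right j => exact ⟨j, rfl⟩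

instance subsingleton_replicate (n : ℕ) (c : Bool) :
    Subsingleton (OrientedKauffmanDiagram (List.replicate n c) (List.replicate n c)) :=
  ⟨fun D D' => ext_toDiagram <|
    (toDiagram_eq_id_of_replicate D).trans (toDiagram_eq_id_of_replicate D').symm⟩

end OrientedKauffmanDiagram

lemma List.exists_getElem_ne_getElem_succ {α : Type*} [Nonempty α] {l : List α}
    (h : ∀ n a, l ≠ replicate n a) : ∃ i, ∃ hi : i + 1 < l.length, l[i] ≠ l[i + 1] := by
  by_contra! hl
  obtain _ | ⟨a, t⟩ := l
  · exact h 0 (Classical.arbitrary α) rfl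
  · have ht := isChain_cons_eq_iff_eq_replicate.1 (isChain_iff_getElem.2 hl)
    exact h (t.length + 1) a (by rw [replicate_succ, ← ht])

/-- In the oriented Kauffman category `O_d`, the endomorphism space
`End(X^w) = ℂ[K_{w,w}]` (the free complex vector space on oriented Kauffman diagrams
of type `(w, w)`) is one-dimensional if and only if `w = X^n` or `w = (X*)^n` for
some `n ≥ 0`, i.e. iff `w` uses only one of the two letters. -/
theorem endomorphism_space_one_dimensional_iff (w : List Bool) :
    Module.rank ℂ (OrientedKauffmanDiagram w w →₀ ℂ) = 1 ↔
      ((∃ n : ℕ, w = List.replicate n true) ∨ (∃ n : ℕ, w = List.replicate n false)) := by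
  rw [rank_finsupp_self', Cardinal.eq_one_iff_unique]
  constructor
  · rintro ⟨hsub, -⟩
    by_contra hw
    obtain ⟨i, hi, hne⟩ := w.exists_getElem_ne_getElem_succ fun n c hc => hw <| by
      cases c
      exacts [.inr ⟨n, hc⟩, .inl ⟨n, hc⟩]
    exact OrientedKauffmanDiagram.capCup_ne_id hi hne (Subsingleton.elim _ _)
  · rintro (⟨n, rfl⟩ | ⟨n, rfl⟩) <;> exact ⟨inferInstance, ⟨.id _⟩⟩
end

section
/- Fix d ∈ ℂ. The set of gauge-equivalence classes of pairs (A,B) of invertible n×n complex matrices satisfying trace(ᵗB A^{-1}) = d = trace(ᵗA B^{-1}), under the action (A,B) ↦ (ᵗT A S, ᵗS B T) for S, T ∈ GL(n,ℂ), is in bijection with the set of similarity classes (conjugacy classes under GL(n,ℂ)) of matrices B ∈ GL(n,ℂ) with trace(B) = d = trace(B^{-1}). -/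
open Matrix

/-!
Statement 11: fix `d ∈ ℂ`.  Gauge-equivalence classes of pairs `(A, B)` of invertible
`n × n` complex matrices with `trace(ᵗB A⁻¹) = d = trace(ᵗA B⁻¹)`, under
`(A, B) ↦ (ᵗT A S, ᵗS B T)` for invertible `S, T`, are in bijection with similarity
classes of invertible matrices `B` with `trace B = d = trace B⁻¹`.
-/

/-- Pairs `(A, B)` of invertible matrices with both loop values equal to `d`. -/
def FiberFunctorData (n : ℕ) (d : ℂ) : Type :=
  { p : Matrix (Fin n) (Fin n) ℂ × Matrix (Fin n) (Fin n) ℂ //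
      IsUnit p.1.det ∧ IsUnit p.2.det ∧
      (p.2ᵀ * p.1⁻¹).trace = d ∧ (p.1ᵀ * p.2⁻¹).trace = d }

/-- Gauge equivalence: `(A, B) ∼ (ᵗT A S, ᵗS B T)` for invertible `S, T`. -/
def gaugeRel (n : ℕ) (d : ℂ) (p q : FiberFunctorData n d) : Prop :=
  ∃ S T : Matrix (Fin n) (Fin n) ℂ, IsUnit S.det ∧ IsUnit T.det ∧
    q.1.1 = Tᵀ * p.1.1 * S ∧ q.1.2 = Sᵀ * p.1.2 * T

/-- Invertible matrices with `trace B = d = trace B⁻¹`. -/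
def TraceNormalizedMatrix (n : ℕ) (d : ℂ) : Type :=
  { B : Matrix (Fin n) (Fin n) ℂ // IsUnit B.det ∧ B.trace = d ∧ B⁻¹.trace = d }

/-- Similarity: conjugacy under `GL(n, ℂ)`. -/
def similarityRel (n : ℕ) (d : ℂ) (B B' : TraceNormalizedMatrix n d) : Prop :=
  ∃ T : Matrix (Fin n) (Fin n) ℂ, IsUnit T.det ∧ B'.1 = T⁻¹ * B.1 * T

namespace GaugeAux

variable {n : ℕ} {d : ℂ}

/-- Forward map on data: `(A, B) ↦ (A⁻¹)ᵀ * B`. -/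
noncomputable def toB (p : FiberFunctorData n d) : TraceNormalizedMatrix n d := by
  refine ⟨(p.1.1⁻¹)ᵀ * p.1.2, ?_, ?_, ?_⟩
  · obtain ⟨⟨A, B⟩, hA, hB, h1, h2⟩ := p
    simp only [det_mul, det_transpose]
    exact (A.isUnit_nonsing_inv_det hA).mul hB
  · obtain ⟨⟨A, B⟩, hA, hB, h1, h2⟩ := p
    calc ((A⁻¹)ᵀ * B).trace = ((A⁻¹)ᵀ * B)ᵀ.trace := (trace_transpose _).symm
      _ = (Bᵀ * A⁻¹).trace := by rw [transpose_mul, transpose_transpose]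
      _ = d := h1
  · obtain ⟨⟨A, B⟩, hA, hB, h1, h2⟩ := p
    have hAT : IsUnit Aᵀ.det := by rwa [det_transpose]
    calc ((A⁻¹)ᵀ * B)⁻¹.trace = (B⁻¹ * ((A⁻¹)ᵀ)⁻¹).trace := by rw [Matrix.mul_inv_rev]
      _ = (B⁻¹ * Aᵀ).trace := by
          rw [transpose_nonsing_inv, nonsing_inv_nonsing_inv _ hAT]
      _ = (Aᵀ * B⁻¹).trace := trace_mul_comm _ _
      _ = d := h2

/-- Backward map on data: `B ↦ (1, B)`. -/
def ofB (B : TraceNormalizedMatrix n d) : FiberFunctorData n d := by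
  refine ⟨(1, B.1), ?_, B.2.1, ?_, ?_⟩
  · simp
  · simpa [inv_one] using (trace_transpose B.1).trans B.2.2.1
  · simpa using B.2.2.2

theorem toB_wd (p q : FiberFunctorData n d) (h : gaugeRel n d p q) :
    similarityRel n d (toB p) (toB q) := by
  obtain ⟨S, T, hS, hT, hq1, hq2⟩ := h
  refine ⟨T, hT, ?_⟩
  have hST : IsUnit Sᵀ.det := by rwa [det_transpose]
  have hTT : IsUnit Tᵀ.det := by rwa [det_transpose]
  show ((q.1.1)⁻¹)ᵀ * q.1.2 = T⁻¹ * (((p.1.1)⁻¹)ᵀ * p.1.2) * T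
  rw [hq1, hq2]
  rw [Matrix.mul_inv_rev, Matrix.mul_inv_rev, transpose_mul, transpose_mul,
    transpose_nonsing_inv Tᵀ, transpose_transpose]
  have hSS : (S⁻¹)ᵀ * Sᵀ = 1 := by
    rw [transpose_nonsing_inv, nonsing_inv_mul _ hST]
  calc T⁻¹ * ((p.1.1)⁻¹)ᵀ * (S⁻¹)ᵀ * (Sᵀ * p.1.2 * T)
      = T⁻¹ * ((p.1.1)⁻¹)ᵀ * ((S⁻¹)ᵀ * Sᵀ) * p.1.2 * T := by
        simp only [Matrix.mul_assoc]
    _ = T⁻¹ * (((p.1.1)⁻¹)ᵀ * p.1.2) * T := by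
        rw [hSS, Matrix.mul_one]; simp only [Matrix.mul_assoc]

theorem ofB_wd (B B' : TraceNormalizedMatrix n d) (h : similarityRel n d B B') :
    gaugeRel n d (ofB B) (ofB B') := by
  obtain ⟨T, hT, hB'⟩ := h
  have hTT : IsUnit Tᵀ.det := by rwa [det_transpose]
  refine ⟨(T⁻¹)ᵀ, T, ?_, hT, ?_, ?_⟩
  · rw [det_transpose]
    exact T.isUnit_nonsing_inv_det hT
  · show (1 : Matrix (Fin n) (Fin n) ℂ) = Tᵀ * 1 * (T⁻¹)ᵀ
    rw [Matrix.mul_one, transpose_nonsing_inv, mul_nonsing_inv _ hTT]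
  · show B'.1 = ((T⁻¹)ᵀ)ᵀ * B.1 * T
    rw [transpose_transpose, hB']

theorem left_rel (p : FiberFunctorData n d) : gaugeRel n d p (ofB (toB p)) := by
  refine ⟨(p.1.1)⁻¹, 1, p.1.1.isUnit_nonsing_inv_det p.2.1, by simp, ?_, ?_⟩
  · show (1 : Matrix (Fin n) (Fin n) ℂ) = (1 : Matrix (Fin n) (Fin n) ℂ)ᵀ * p.1.1 * (p.1.1)⁻¹
    rw [transpose_one, Matrix.one_mul, mul_nonsing_inv _ p.2.1]
  · show ((p.1.1)⁻¹)ᵀ * p.1.2 = ((p.1.1)⁻¹)ᵀ * p.1.2 * 1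
    rw [Matrix.mul_one]

theorem right_eq (B : TraceNormalizedMatrix n d) : toB (ofB B) = B := by
  apply Subtype.ext
  show ((1 : Matrix (Fin n) (Fin n) ℂ)⁻¹)ᵀ * B.1 = B.1
  rw [inv_one, transpose_one, Matrix.one_mul]

end GaugeAux

/-- The set of gauge-equivalence classes of fiber-functor data `(A, B)` with loop
value `d` is in bijection with the set of similarity classes of invertible matrices
with `trace B = d = trace B⁻¹`. -/
theorem fiberFunctors_classified_by_similarity_orbits (n : ℕ) (d : ℂ) :
    Nonempty (Quot (gaugeRel n d) ≃ Quot (similarityRel n d)) := by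
  refine ⟨{
    toFun := Quot.map GaugeAux.toB (GaugeAux.toB_wd)
    invFun := Quot.map GaugeAux.ofB (GaugeAux.ofB_wd)
    left_inv := ?_
    right_inv := ?_ }⟩
  · rintro ⟨p⟩
    exact (Quot.sound (GaugeAux.left_rel p)).symm
  · rintro ⟨B⟩
    exact congrArg (Quot.mk _) (GaugeAux.right_eq B)
end
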